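/- arXiv:1407.4754 — 5 statements merged into one kernel-verified Lean document; each statement's English description precedes it below -/
import Mathlib

section
/- Let H and K be 2-dimensional Hilbert spaces, x = (1/√2)(e₁⊗f₁ + e₂⊗f₂) with {e₁,e₂}, {f₁,f₂} orthonormal bases, and ω_x the corresponding vector state on B(H⊗K). Then for every state ρ in the norm closure of the convex hull of product states (states of the form φ⊗ψ), one has ‖ω_x − ρ‖ ≥ 1/4. -/
open scoped Kronecker ComplexOrder

/-- A state on `B(EuclideanSpace ℂ ι)`: a positive linear functional `σ` with
`σ(𝟙) = 1` (hence of norm 1). -/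
def IsState {ι : Type*} [Fintype ι] [DecidableEq ι]
    (σ : (EuclideanSpace ℂ ι →L[ℂ] EuclideanSpace ℂ ι) →L[ℂ] ℂ) : Prop :=
  σ 1 = 1 ∧ ∀ T : EuclideanSpace ℂ ι →L[ℂ] EuclideanSpace ℂ ι,
    T.IsPositive → 0 ≤ σ T

/-- The vector state `ω_x(T) = ⟨x, T x⟩` on `B(EuclideanSpace ℂ ι)`. -/
noncomputable def vectorState {ι : Type*} [Fintype ι] [DecidableEq ι]
    (x : EuclideanSpace ℂ ι) :
    (EuclideanSpace ℂ ι →L[ℂ] EuclideanSpace ℂ ι) →L[ℂ] ℂ :=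
  LinearMap.toContinuousLinearMap
    { toFun := fun T => (inner ℂ x (T x) : ℂ)
      map_add' := fun T S => by
        simp [ContinuousLinearMap.add_apply, inner_add_right]
      map_smul' := fun c T => by
        simp [ContinuousLinearMap.smul_apply, inner_smul_right] }

/-- A product state on `B(H ⊗ K)` (with `H ⊗ K` modeled as
`EuclideanSpace ℂ (Fin 2 × Fin 2)`): a functional of the form `φ ⊗ ψ`,
i.e. `ρ(A ⊗ B) = φ(A)ψ(B)` for states `φ` on `B(H)`, `ψ` on `B(K)`. -/
def IsProductState
    (ρ : (EuclideanSpace ℂ (Fin 2 × Fin 2) →L[ℂ] EuclideanSpace ℂ (Fin 2 × Fin 2))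
      →L[ℂ] ℂ) : Prop :=
  ∃ φ ψ : (EuclideanSpace ℂ (Fin 2) →L[ℂ] EuclideanSpace ℂ (Fin 2)) →L[ℂ] ℂ,
    IsState φ ∧ IsState ψ ∧
    ∀ A B : Matrix (Fin 2) (Fin 2) ℂ,
      ρ (Matrix.toEuclideanCLM (𝕜 := ℂ) (A ⊗ₖ B)) =
        φ (Matrix.toEuclideanCLM (𝕜 := ℂ) A) * ψ (Matrix.toEuclideanCLM (𝕜 := ℂ) B)

/-!
Let `P = |x⟩⟨x|`, an operator of norm one with `ω_x(P) = 1`. Since `Σᵢⱼ Eᵢⱼ ⊗ Eᵢⱼ = 2P`, a product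
state `φ ⊗ ψ` gives `P` the value `½ Σᵢⱼ φ(Eᵢⱼ) ψ(Eᵢⱼ)`. The matrices `(φ(Eᵢⱼ))` and `(ψ(Eᵢⱼ))` are
positive semidefinite of trace one, so the `2 × 2` minor bound `|aᵢⱼ|² ≤ aᵢᵢ aⱼⱼ` and AM–GM give
`Re (φ ⊗ ψ)(P) ≤ ½`. This is a closed convex condition on `ρ`, so it holds on the closed convex hull
of the product states, and there `‖ω_x − ρ‖ ≥ Re (ω_x − ρ)(P) ≥ ½`.
-/

open Matrix InnerProductSpace

theorem Matrix.posSemidef_of_forall_star_dotProduct_mulVec_nonneg {n : Type*} [Fintype n]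
    [DecidableEq n] {M : Matrix n n ℂ} (hM : ∀ v, 0 ≤ star v ⬝ᵥ (M *ᵥ v)) : M.PosSemidef := by
  rw [← isPositive_toEuclideanLin_iff, LinearMap.isPositive_iff_complex]
  intro x
  have hx : inner ℂ (M.toEuclideanLin x) x = star x.ofLp ⬝ᵥ (M *ᵥ x.ofLp) := by
    rw [← (IsSelfAdjoint.of_nonneg (hM x.ofLp)).star_eq, star_dotProduct, star_star,
      dotProduct_comm]
    simp [EuclideanSpace.inner_eq_star_dotProduct]
  obtain ⟨hre, him⟩ := Complex.nonneg_iff.mp (hM x.ofLp)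
  rw [hx]
  exact ⟨Complex.ext rfl him, hre⟩

theorem Matrix.isPositive_toEuclideanCLM_iff {n 𝕜 : Type*} [Fintype n] [DecidableEq n]
    [RCLike 𝕜] {A : Matrix n n 𝕜} : (toEuclideanCLM (𝕜 := 𝕜) A).IsPositive ↔ A.PosSemidef := by
  rw [← ContinuousLinearMap.isPositive_toLinearMap_iff, coe_toEuclideanCLM_eq_toEuclideanLin,
    isPositive_toEuclideanLin_iff]

theorem Matrix.toEuclideanCLM_vecMulVec_star {n 𝕜 : Type*} [Fintype n] [DecidableEq n]
    [RCLike 𝕜] (x y : EuclideanSpace 𝕜 n) :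
    toEuclideanCLM (𝕜 := 𝕜) (vecMulVec x (star y)) = rankOne 𝕜 x y := by
  apply ContinuousLinearMap.coe_injective
  rw [coe_toEuclideanCLM_eq_toEuclideanLin, ← symm_toEuclideanLin_rankOne,
    LinearEquiv.apply_symm_apply]

namespace Matrix.PosSemidef

variable {n 𝕜 : Type*} [RCLike 𝕜] {M N : Matrix n n 𝕜}

theorem re_diag_nonneg (hM : M.PosSemidef) (i : n) : 0 ≤ RCLike.re (M i i) :=
  (RCLike.nonneg_iff.mp hM.diag_nonneg).1

theorem norm_sq_apply_le (hM : M.PosSemidef) (i j : n) :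
    ‖M i j‖ ^ 2 ≤ RCLike.re (M i i) * RCLike.re (M j j) := by
  have hdet := (hM.submatrix ![i, j]).det_nonneg
  simp only [det_fin_two, submatrix_apply, cons_val_zero, cons_val_one] at hdet
  rw [← hM.1.apply j i, RCLike.star_def, RCLike.mul_conj] at hdet
  have hdiag k := (RCLike.nonneg_iff.mp (hM.diag_nonneg (i := k))).2
  simpa [hdiag i, hdiag j] using (RCLike.nonneg_iff.mp hdet).1

theorem norm_mul_apply_le [Fintype n] (hM : M.PosSemidef) (hN : N.PosSemidef) (i j : n) :
    ‖M i j * N i j‖ ≤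
      (RCLike.re (M i i) * RCLike.re (N j j) + RCLike.re (M j j) * RCLike.re (N i i)) / 2 := by
  have := hM.re_diag_nonneg i
  have := hM.re_diag_nonneg j
  have := hN.re_diag_nonneg i
  have := hN.re_diag_nonneg j
  rw [norm_mul, ← pow_le_pow_iff_left₀ (by positivity) (by positivity) two_ne_zero]
  -- `(‖Mᵢⱼ‖ ‖Nᵢⱼ‖)² ≤ (Mᵢᵢ Nⱼⱼ) (Mⱼⱼ Nᵢᵢ)`, then AM–GM
  nlinarith [mul_le_mul (hM.norm_sq_apply_le i j) (hN.norm_sq_apply_le i j) (by positivity)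
      (by positivity),
    sq_nonneg (RCLike.re (M i i) * RCLike.re (N j j) - RCLike.re (M j j) * RCLike.re (N i i))]

theorem re_sum_mul_le [Fintype n] (hM : M.PosSemidef) (hN : N.PosSemidef) :
    RCLike.re (∑ i, ∑ j, M i j * N i j) ≤ RCLike.re M.trace * RCLike.re N.trace := by
  calc RCLike.re (∑ i, ∑ j, M i j * N i j) ≤ ‖∑ i, ∑ j, M i j * N i j‖ := RCLike.re_le_norm _
    _ ≤ ∑ i, ∑ j, ‖M i j * N i j‖ := (norm_sum_le _ _).trans (by gcongr; exact norm_sum_le _ _)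
    _ ≤ ∑ i, ∑ j,
          (RCLike.re (M i i) * RCLike.re (N j j) + RCLike.re (M j j) * RCLike.re (N i i)) / 2 := by
      gcongr with i _ j _
      exact hM.norm_mul_apply_le hN i j
    _ = RCLike.re M.trace * RCLike.re N.trace := by
      have hswap : ∑ i, ∑ j, RCLike.re (M j j) * RCLike.re (N i i) =
          ∑ i, ∑ j, RCLike.re (M i i) * RCLike.re (N j j) := Finset.sum_comm
      simp only [add_div, Finset.sum_add_distrib, ← Finset.sum_div, hswap, trace, diag_apply,
        map_sum, Finset.sum_mul_sum]
      ring

end Matrix.PosSemidef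

section FunctionalMatrix

variable {ι : Type*} [Fintype ι] [DecidableEq ι]

/-- The transpose of the density matrix of `σ`. -/
noncomputable def functionalMatrix (σ : (EuclideanSpace ℂ ι →L[ℂ] EuclideanSpace ℂ ι) →L[ℂ] ℂ) :
    Matrix ι ι ℂ :=
  Matrix.of fun i j => σ (toEuclideanCLM (𝕜 := ℂ) (single i j 1))

theorem apply_toEuclideanCLM_eq_sum_functionalMatrix
    (σ : (EuclideanSpace ℂ ι →L[ℂ] EuclideanSpace ℂ ι) →L[ℂ] ℂ) (A : Matrix ι ι ℂ) :
    σ (toEuclideanCLM (𝕜 := ℂ) A) = ∑ i, ∑ j, A i j * functionalMatrix σ i j := by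
  conv_lhs => rw [matrix_eq_sum_single A]
  simp only [map_sum, functionalMatrix, of_apply]
  refine Finset.sum_congr rfl fun i _ => Finset.sum_congr rfl fun j _ => ?_
  rw [← smul_eq_mul, ← map_smul, ← map_smul, smul_single, smul_eq_mul, mul_one]

theorem star_dotProduct_functionalMatrix_mulVec
    (σ : (EuclideanSpace ℂ ι →L[ℂ] EuclideanSpace ℂ ι) →L[ℂ] ℂ) (v : ι → ℂ) :
    star v ⬝ᵥ (functionalMatrix σ *ᵥ v) = σ (toEuclideanCLM (𝕜 := ℂ) (vecMulVec (star v) v)) := by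
  simp only [apply_toEuclideanCLM_eq_sum_functionalMatrix, dotProduct, mulVec, vecMulVec_apply,
    Finset.mul_sum, mul_assoc, mul_comm (v _)]

variable {σ : (EuclideanSpace ℂ ι →L[ℂ] EuclideanSpace ℂ ι) →L[ℂ] ℂ}

theorem IsState.posSemidef_functionalMatrix (hσ : IsState σ) : (functionalMatrix σ).PosSemidef :=
  posSemidef_of_forall_star_dotProduct_mulVec_nonneg fun v => by
    rw [star_dotProduct_functionalMatrix_mulVec]
    exact hσ.2 _ (isPositive_toEuclideanCLM_iff.mpr (posSemidef_vecMulVec_star_self v))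

theorem IsState.trace_functionalMatrix (hσ : IsState σ) : (functionalMatrix σ).trace = 1 := by
  have h := apply_toEuclideanCLM_eq_sum_functionalMatrix σ 1
  simp only [map_one, hσ.1, one_apply, ite_mul, one_mul, zero_mul, Finset.sum_ite_eq,
    Finset.mem_univ, if_true] at h
  exact h.symm

end FunctionalMatrix

theorem ContinuousLinearMap.re_apply_le_opNorm {E : Type*} [SeminormedAddCommGroup E]
    [NormedSpace ℂ E] (f : E →L[ℂ] ℂ) {T : E} (hT : ‖T‖ ≤ 1) : (f T).re ≤ ‖f‖ :=
  (Complex.re_le_norm _).trans ((f.le_opNorm_of_le hT).trans_eq (mul_one _))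

theorem re_apply_le_of_mem_closure_convexHull {E : Type*} [SeminormedAddCommGroup E]
    [NormedSpace ℂ E] {S : Set (E →L[ℂ] ℂ)} {T : E} {c : ℝ} (hS : ∀ σ ∈ S, (σ T).re ≤ c)
    {ρ : E →L[ℂ] ℂ} (hρ : ρ ∈ closure (convexHull ℝ S)) : (ρ T).re ≤ c := by
  let ℓ : (E →L[ℂ] ℂ) →L[ℝ] ℝ :=
    Complex.reCLM.comp ((ContinuousLinearMap.apply ℂ ℂ T).restrictScalars ℝ)
  have hclosed : IsClosed {σ | ℓ σ ≤ c} := isClosed_le ℓ.continuous continuous_const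
  exact closure_minimal (convexHull_min hS (convex_halfSpace_le ℓ.isLinear c)) hclosed hρ

theorem vectorState_rankOne_self {ι : Type*} [Fintype ι] [DecidableEq ι]
    {x : EuclideanSpace ℂ ι} (hx : ‖x‖ = 1) : vectorState x (rankOne ℂ x x) = 1 := by
  change inner ℂ x (rankOne ℂ x x x) = 1
  rw [rankOne_apply, inner_smul_right, inner_self_eq_norm_sq_to_K, hx]
  norm_num

noncomputable def maxEntangled : EuclideanSpace ℂ (Fin 2 × Fin 2) :=
  ((Real.sqrt 2 : ℂ))⁻¹ • (EuclideanSpace.single (0, 0) 1 + EuclideanSpace.single (1, 1) 1)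

theorem norm_maxEntangled : ‖maxEntangled‖ = 1 := by
  simp [maxEntangled, EuclideanSpace.norm_eq, Fintype.sum_prod_type]
  norm_num

theorem vecMulVec_maxEntangled :
    vecMulVec maxEntangled (star maxEntangled) =
      (2 : ℂ)⁻¹ • ∑ i : Fin 2, ∑ j : Fin 2, single i j (1 : ℂ) ⊗ₖ single i j 1 := by
  have hsqrt : ((Real.sqrt 2 : ℂ))⁻¹ * ((Real.sqrt 2 : ℂ))⁻¹ = 2⁻¹ := by
    rw [← mul_inv, ← Complex.ofReal_mul, Real.mul_self_sqrt zero_le_two, Complex.ofReal_ofNat]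
  ext ⟨a, b⟩ ⟨c, d⟩
  fin_cases a <;> fin_cases b <;> fin_cases c <;> fin_cases d <;>
    simp [maxEntangled, vecMulVec_apply, Fin.sum_univ_two, hsqrt]

theorem IsProductState.re_apply_rankOne_maxEntangled_le
    {ρ : (EuclideanSpace ℂ (Fin 2 × Fin 2) →L[ℂ] EuclideanSpace ℂ (Fin 2 × Fin 2)) →L[ℂ] ℂ}
    (hρ : IsProductState ρ) : (ρ (rankOne ℂ maxEntangled maxEntangled)).re ≤ 1 / 2 := by
  obtain ⟨φ, ψ, hφ, hψ, hρφψ⟩ := hρ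
  have hρP : ρ (rankOne ℂ maxEntangled maxEntangled) =
      (2⁻¹ : ℝ) * ∑ i, ∑ j, functionalMatrix φ i j * functionalMatrix ψ i j := by
    rw [← toEuclideanCLM_vecMulVec_star, vecMulVec_maxEntangled, map_smul, map_smul]
    simp only [map_sum, hρφψ, smul_eq_mul, Complex.ofReal_inv, Complex.ofReal_ofNat]
    rfl
  have h := hφ.posSemidef_functionalMatrix.re_sum_mul_le hψ.posSemidef_functionalMatrix
  simp only [hφ.trace_functionalMatrix, hψ.trace_functionalMatrix, RCLike.re_to_complex,
    Complex.one_re, mul_one] at h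
  rw [hρP, Complex.re_ofReal_mul]
  linarith

/-- Kadison–Ringrose: for the maximally entangled vector
`x = (1/√2)(e₁⊗f₁ + e₂⊗f₂)` in the tensor product of two 2-dimensional Hilbert
spaces, every state `ρ` in the norm closure of the convex hull of the product
states satisfies `‖ω_x − ρ‖ ≥ 1/4`. -/
theorem vector_state_far_from_separable_states :
    let x : EuclideanSpace ℂ (Fin 2 × Fin 2) :=
      ((Real.sqrt 2 : ℂ))⁻¹ •
        (EuclideanSpace.single ((0 : Fin 2), (0 : Fin 2)) (1 : ℂ) +
          EuclideanSpace.single ((1 : Fin 2), (1 : Fin 2)) (1 : ℂ))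
    ∀ ρ : (EuclideanSpace ℂ (Fin 2 × Fin 2) →L[ℂ] EuclideanSpace ℂ (Fin 2 × Fin 2))
        →L[ℂ] ℂ,
      IsState ρ →
      ρ ∈ closure (convexHull ℝ {σ | IsProductState σ}) →
      (1 : ℝ) / 4 ≤ ‖vectorState x - ρ‖ := by
  intro _ ρ _ hρ
  change (1 : ℝ) / 4 ≤ ‖vectorState maxEntangled - ρ‖
  let P := rankOne ℂ maxEntangled maxEntangled
  have hP : ‖P‖ ≤ 1 := by simp [P, norm_maxEntangled]
  have hρP : (ρ P).re ≤ 1 / 2 :=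
    re_apply_le_of_mem_closure_convexHull
      (fun _ hσ => IsProductState.re_apply_rankOne_maxEntangled_le hσ) hρ
  calc (1 : ℝ) / 4 ≤ 1 - 1 / 2 := by norm_num
    _ ≤ ((vectorState maxEntangled - ρ) P).re := by
      rw [_root_.sub_apply, vectorState_rankOne_self norm_maxEntangled,
        Complex.sub_re, Complex.one_re]
      linarith
    _ ≤ ‖vectorState maxEntangled - ρ‖ := ContinuousLinearMap.re_apply_le_opNorm _ hP
end

section
/- For a compact convex subset K of a locally convex Hausdorff topological vector space and any probability Radon measure μ on K, there exists a unique point b(μ) ∈ K (the barycenter) such that f(b(μ)) = ∫_K f dμ for all continuous affine real-valued functions f on K. -/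
/-!
Evaluating finitely many continuous linear functionals `ℓ₁, …, ℓₙ` maps `K` onto a compact convex
subset of `ℝⁿ`, which therefore contains the mean `(∫ ℓ₁, …, ∫ ℓₙ)`; so the closed sets
`{x | ℓ x = ∫ ℓ dμ}` have the finite intersection property on the compact set `K`, and a point of
their common intersection is a barycenter. An affine `f` is a linear functional plus a constant, and
`μ` has mass one, so the identity passes from linear to affine `f`. Uniqueness holds because the
continuous dual of a locally convex Hausdorff space separates points.
-/

open MeasureTheory

section Barycenter

variable {E : Type*} [AddCommGroup E] [Module ℝ E] [TopologicalSpace E]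
  {α : Type*} [MeasurableSpace α] {μ : Measure α} [IsProbabilityMeasure μ] {g : α → E}

theorem exists_mem_forall_mem_finset_apply_eq_integral {K : Set E} (hK : IsCompact K)
    (hKc : Convex ℝ K) (hgK : ∀ᵐ a ∂μ, g a ∈ K)
    (hg : ∀ ℓ : E →L[ℝ] ℝ, Integrable (fun a ↦ ℓ (g a)) μ) (u : Finset (E →L[ℝ] ℝ)) :
    ∃ b ∈ K, ∀ ℓ ∈ u, ℓ b = ∫ a, ℓ (g a) ∂μ := by
  let T : E →L[ℝ] (u → ℝ) := ContinuousLinearMap.pi fun ℓ ↦ (ℓ : E →L[ℝ] ℝ)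
  have hTg : ∀ ℓ : u, Integrable (fun a ↦ T (g a) ℓ) μ := fun ℓ ↦ hg ℓ
  have hmean : ∫ a, T (g a) ∂μ ∈ T '' K :=
    (hKc.linear_image T.toLinearMap).integral_mem (hK.image T.continuous).isClosed
      (hgK.mono fun a ha ↦ Set.mem_image_of_mem T ha) (Integrable.of_eval hTg)
  obtain ⟨b, hbK, hb⟩ := hmean
  exact ⟨b, hbK, fun ℓ hℓ ↦ (congrFun hb ⟨ℓ, hℓ⟩).trans (eval_integral hTg _)⟩

theorem exists_mem_forall_apply_eq_integral {K : Set E} (hK : IsCompact K) (hKc : Convex ℝ K)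
    (hgK : ∀ᵐ a ∂μ, g a ∈ K) (hg : ∀ ℓ : E →L[ℝ] ℝ, Integrable (fun a ↦ ℓ (g a)) μ) :
    ∃ b ∈ K, ∀ ℓ : E →L[ℝ] ℝ, ℓ b = ∫ a, ℓ (g a) ∂μ := by
  obtain ⟨b, hbK, hb⟩ := hK.inter_iInter_nonempty
    (fun ℓ : E →L[ℝ] ℝ ↦ {x | ℓ x = ∫ a, ℓ (g a) ∂μ})
    (fun ℓ ↦ isClosed_eq ℓ.continuous continuous_const) fun u ↦ by
      obtain ⟨b, hbK, hb⟩ := exists_mem_forall_mem_finset_apply_eq_integral hK hKc hgK hg u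
      exact ⟨b, hbK, Set.mem_iInter₂.mpr hb⟩
  exact ⟨b, hbK, Set.mem_iInter.mp hb⟩

theorem AffineMap.apply_eq_integral_of_forall_continuousLinearMap [IsTopologicalAddGroup E]
    (hg : ∀ ℓ : E →L[ℝ] ℝ, Integrable (fun a ↦ ℓ (g a)) μ) {b : E}
    (hb : ∀ ℓ : E →L[ℝ] ℝ, ℓ b = ∫ a, ℓ (g a) ∂μ) (f : E →ᵃ[ℝ] ℝ) (hf : Continuous f) :
    f b = ∫ a, f (g a) ∂μ := by
  let ℓ : E →L[ℝ] ℝ := ⟨f.linear, AffineMap.continuous_linear_iff.mpr hf⟩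
  have hf_decomp : ∀ x, f x = ℓ x + f 0 := fun x ↦ congrFun f.decomp x
  calc f b = ℓ b + f 0 := hf_decomp b
    _ = ∫ a, (ℓ (g a) + f 0) ∂μ := by
      rw [integral_add (hg ℓ) (integrable_const _), hb ℓ, integral_const, probReal_univ, one_smul]
    _ = ∫ a, f (g a) ∂μ := by simp only [← hf_decomp]

end Barycenter

theorem exists_unique_barycenter_general
    {E : Type*} [AddCommGroup E] [Module ℝ E] [TopologicalSpace E]
    [IsTopologicalAddGroup E] [ContinuousSMul ℝ E] [LocallyConvexSpace ℝ E]
    [T2Space E] [MeasurableSpace E] [BorelSpace E]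
    (K : Set E) (hK : IsCompact K) (hKc : Convex ℝ K)
    (μ : Measure K) [IsProbabilityMeasure μ] :
    ∃! b : E, b ∈ K ∧
      ∀ f : E →ᵃ[ℝ] ℝ, Continuous f → f b = ∫ x : K, f (x : E) ∂μ := by
  have : CompactSpace K := isCompact_iff_compactSpace.mp hK
  have hint (ℓ : E →L[ℝ] ℝ) : Integrable (fun x : K ↦ ℓ x) μ :=
    (ℓ.continuous.comp continuous_subtype_val).integrable_of_hasCompactSupport
      (HasCompactSupport.of_compactSpace _)
  obtain ⟨b, hbK, hb⟩ := exists_mem_forall_apply_eq_integral hK hKc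
    (Filter.Eventually.of_forall Subtype.property) hint
  refine ⟨b, ⟨hbK, AffineMap.apply_eq_integral_of_forall_continuousLinearMap hint hb⟩, ?_⟩
  rintro b' ⟨-, hb'⟩
  refine (SeparatingDual.eq_iff_forall_dual_eq (R := ℝ)).mpr fun ℓ ↦ ?_
  simpa [hb ℓ] using hb' ℓ.toLinearMap.toAffineMap ℓ.continuous

/-- For a compact convex subset `K` of a locally convex Hausdorff real
topological vector space and any Radon probability measure `μ` on `K`,
there is a unique point `b(μ) ∈ K` (the barycenter) with
`f (b(μ)) = ∫ f dμ` for every continuous affine real-valued function `f`. -/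
theorem exists_unique_barycenter
    {E : Type*} [AddCommGroup E] [Module ℝ E] [TopologicalSpace E]
    [IsTopologicalAddGroup E] [ContinuousSMul ℝ E] [LocallyConvexSpace ℝ E]
    [T2Space E] [MeasurableSpace E] [BorelSpace E]
    (K : Set E) (hK : IsCompact K) (hKc : Convex ℝ K)
    (μ : Measure K) [IsProbabilityMeasure μ] [μ.Regular] :
    ∃! b : E, b ∈ K ∧
      ∀ f : E →ᵃ[ℝ] ℝ, Continuous f → f b = ∫ x : K, f (x : E) ∂μ :=
  exists_unique_barycenter_general K hK hKc μ
end

section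
/- A point ω of a compact convex set K is an extreme point if and only if the Dirac measure δ_ω is the only probability (Radon) measure on K with barycenter ω. -/
/-!
If `μ` has barycenter an extreme point `ω` and `0 < μ A < 1`, then `ω` is a proper convex
combination of the barycenters of `μ` conditioned on `A` and on `Aᶜ` (these exist by the finite
intersection property and Jensen's inequality in finite dimension), so the first of them is `ω`.
For a closed half-space `A = {ℓ ≥ r}` with `ℓ ω < r` that conditional barycenter lies in `A`,
hence every such half-space is `μ`-null. They cover `K \ {ω}`, so by compactness every compact
subset of `K \ {ω}` is null and inner regularity gives `μ = δ_ω`. Conversely, if `ω` lies in the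
open segment between `x₁, x₂ ∈ K` with weights `a, b`, then `a δ_{x₁} + b δ_{x₂}` is a regular
probability measure with barycenter `ω`, and it is `δ_ω` only if `x₁ = ω`.
-/

open MeasureTheory ProbabilityTheory Set
open scoped ENNReal Topology

namespace MeasureTheory.Measure

variable {α : Type*} [TopologicalSpace α] [MeasurableSpace α]

instance innerRegular_dirac (a : α) : (dirac a).InnerRegular where
  innerRegular U hU r hr := by
    by_cases ha : a ∈ U
    · exact ⟨{a}, singleton_subset_iff.2 ha, isCompact_singleton,
        by rwa [dirac_apply_of_mem (mem_singleton a), ← dirac_apply_of_mem ha]⟩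
    · simp [dirac_apply' a hU, ha] at hr

theorem eq_dirac_of_forall_ne_exists_nhds_measure_eq_zero [T1Space α] [OpensMeasurableSpace α]
    (μ : Measure α) [IsProbabilityMeasure μ] [μ.Regular] (a : α)
    (h : ∀ x ≠ a, ∃ U ∈ 𝓝 x, μ U = 0) : μ = dirac a := by
  have hcompl : μ {a}ᶜ = 0 := by
    refine nonpos_iff_eq_zero.1 ?_
    rw [isOpen_compl_singleton.measure_eq_iSup_isCompact]
    refine iSup₂_le fun C hC => iSup_le fun hCc => (hCc.measure_zero_of_nhdsWithin
      fun x hx => ?_).le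
    obtain ⟨U, hU, hU0⟩ := h x (hC hx)
    exact ⟨U, mem_nhdsWithin_of_mem_nhds hU, hU0⟩
  calc μ = μ.restrict {a} := (restrict_eq_self_of_ae_mem (ae_iff.2 hcompl)).symm
    _ = dirac a := by
      rw [restrict_singleton, (prob_compl_eq_zero_iff (measurableSet_singleton a)).1 hcompl,
        one_smul]

end MeasureTheory.Measure

theorem Continuous.integrable_comp_subtypeVal {X F : Type*} [TopologicalSpace X]
    [MeasurableSpace X] [OpensMeasurableSpace X] [NormedAddCommGroup F] {s : Set X}
    [CompactSpace s] {μ : Measure s} [IsFiniteMeasure μ] {f : X → F} (hf : Continuous f) :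
    Integrable (fun y : s => f y) μ :=
  (hf.comp continuous_subtype_val).integrable_of_hasCompactSupport
    (HasCompactSupport.of_compactSpace _)

section Barycenter

variable {E : Type*} [AddCommGroup E] [Module ℝ E] [TopologicalSpace E] [MeasurableSpace E]
  {K : Set E}

def IsBarycenter (μ : Measure K) (x : E) : Prop :=
  ∀ f : E →ᵃ[ℝ] ℝ, Continuous f → f x = ∫ y : K, f y ∂μ

theorem isBarycenter_dirac [OpensMeasurableSpace E] (x : K) : IsBarycenter (Measure.dirac x) x :=
  fun _ hf => (integral_dirac' _ x (hf.comp continuous_subtype_val).stronglyMeasurable).symm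

theorem IsBarycenter.eq [IsTopologicalAddGroup E] [ContinuousSMul ℝ E] [LocallyConvexSpace ℝ E]
    [T1Space E] {μ : Measure K} {x y : E} (hx : IsBarycenter μ x) (hy : IsBarycenter μ y) :
    x = y :=
  SeparatingDual.eq_iff_forall_dual_eq.2 fun g => by
    have hg {z : E} (hz : IsBarycenter μ z) := hz _ g.toContinuousAffineMap.cont
    exact (hg hx).trans (hg hy).symm

theorem IsBarycenter.smul_add_smul [OpensMeasurableSpace E] [CompactSpace K]
    {ν₁ ν₂ : Measure K} [IsFiniteMeasure ν₁] [IsFiniteMeasure ν₂] {x₁ x₂ : E}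
    (h₁ : IsBarycenter ν₁ x₁) (h₂ : IsBarycenter ν₂ x₂) {c₁ c₂ : ℝ≥0∞} (hc : c₁ + c₂ = 1) :
    IsBarycenter (c₁ • ν₁ + c₂ • ν₂) (c₁.toReal • x₁ + c₂.toReal • x₂) := by
  have hc₁ : c₁ ≠ ∞ := ne_top_of_le_ne_top ENNReal.one_ne_top (hc ▸ le_self_add)
  have hc₂ : c₂ ≠ ∞ := ne_top_of_le_ne_top ENNReal.one_ne_top (hc ▸ le_add_self)
  have hc' : c₁.toReal + c₂.toReal = 1 := by
    rw [← ENNReal.toReal_add hc₁ hc₂, hc, ENNReal.toReal_one]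
  intro f hf
  have : IsFiniteMeasure (c₁ • ν₁) := ν₁.smul_finite hc₁
  have : IsFiniteMeasure (c₂ • ν₂) := ν₂.smul_finite hc₂
  rw [integral_add_measure hf.integrable_comp_subtypeVal hf.integrable_comp_subtypeVal,
    integral_smul_measure, integral_smul_measure, ← h₁ f hf, ← h₂ f hf,
    Convex.combo_affine_apply hc', smul_eq_mul, smul_eq_mul]

theorem IsBarycenter.le_apply_of_ae_le [OpensMeasurableSpace E] [CompactSpace K]
    {ν : Measure K} [IsProbabilityMeasure ν] {x : E} (hx : IsBarycenter ν x)
    {f : E →ᵃ[ℝ] ℝ} (hf : Continuous f) {r : ℝ} (h : ∀ᵐ y : K ∂ν, r ≤ f y) : r ≤ f x := by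
  rw [hx f hf]
  simpa using integral_mono_ae (integrable_const r) hf.integrable_comp_subtypeVal h

theorem Convex.exists_mem_forall_apply_eq_integral [OpensMeasurableSpace E] [CompactSpace K]
    (hKc : Convex ℝ K) (ν : Measure K) [IsProbabilityMeasure ν] {ι : Type*} [Fintype ι]
    (f : ι → E →ᵃ[ℝ] ℝ) (hf : ∀ i, Continuous (f i)) :
    ∃ x ∈ K, ∀ i, f i x = ∫ y : K, f i y ∂ν := by
  let F : E →ᵃ[ℝ] (ι → ℝ) := AffineMap.pi f
  have hF : Continuous F := continuous_pi hf
  have hK : IsCompact K := isCompact_iff_compactSpace.2 ‹_›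
  obtain ⟨x, hxK, hx⟩ : (∫ y : K, F y ∂ν) ∈ F '' K :=
    (hKc.affine_image F).integral_mem (hK.image hF).isClosed
      (Filter.Eventually.of_forall fun y => mem_image_of_mem F y.2)
      hF.integrable_comp_subtypeVal
  refine ⟨x, hxK, fun i => ?_⟩
  have hxi := congrFun hx i
  rwa [eval_integral (f := fun y : K => F y) (fun i => (hf i).integrable_comp_subtypeVal)
    i] at hxi

theorem exists_isBarycenter [OpensMeasurableSpace E] [CompactSpace K] (hKc : Convex ℝ K)
    (ν : Measure K) [IsProbabilityMeasure ν] : ∃ x ∈ K, IsBarycenter ν x := by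
  let ι := {f : E →ᵃ[ℝ] ℝ // Continuous f}
  have hK : IsCompact K := isCompact_iff_compactSpace.2 ‹_›
  obtain ⟨x, hxK, hx⟩ := hK.inter_iInter_nonempty
    (fun f : ι => {x | f.1 x = ∫ y : K, f.1 y ∂ν}) (fun f => isClosed_eq f.2 continuous_const)
    fun u => by
      obtain ⟨x, hxK, hx⟩ := hKc.exists_mem_forall_apply_eq_integral ν
        (fun f : u => f.1.1) fun f => f.1.2
      exact ⟨x, hxK, mem_iInter₂.2 fun f hf => hx ⟨f, hf⟩⟩
  exact ⟨x, hxK, fun f hf => mem_iInter.1 hx ⟨f, hf⟩⟩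

end Barycenter

section ExtremePoint

variable {E : Type*} [AddCommGroup E] [Module ℝ E] [TopologicalSpace E]
  [IsTopologicalAddGroup E] [ContinuousSMul ℝ E] [LocallyConvexSpace ℝ E] [T1Space E]
  [MeasurableSpace E] [OpensMeasurableSpace E] {K : Set E} [CompactSpace K]
  {μ : Measure K} [IsProbabilityMeasure μ] {ω : E}

theorem IsBarycenter.cond_of_mem_extremePoints (hKc : Convex ℝ K)
    (hω : ω ∈ extremePoints ℝ K) (hμ : IsBarycenter μ ω) {A : Set K} (hA : MeasurableSet A)
    (hA0 : μ A ≠ 0) : IsBarycenter μ[|A] ω := by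
  by_cases hAc : μ Aᶜ = 0
  · rwa [ProbabilityTheory.cond, Measure.restrict_eq_self_of_ae_mem (ae_iff.2 hAc),
      (prob_compl_eq_zero_iff hA).1 hAc, inv_one, one_smul]
  have := cond_isProbabilityMeasure (μ := μ) hA0
  have := cond_isProbabilityMeasure (μ := μ) hAc
  obtain ⟨x₁, hx₁K, hx₁⟩ := exists_isBarycenter hKc μ[|A]
  obtain ⟨x₂, hx₂K, hx₂⟩ := exists_isBarycenter hKc μ[|Aᶜ]
  have hμ_eq : μ A • μ[|A] + μ Aᶜ • μ[|Aᶜ] = μ := by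
    ext t
    simp only [Measure.add_apply, Measure.smul_apply, smul_eq_mul, mul_comm (μ A),
      mul_comm (μ Aᶜ), cond_add_cond_compl_eq hA]
  have hω_eq : ω = (μ A).toReal • x₁ + (μ Aᶜ).toReal • x₂ := by
    have hmix := hx₁.smul_add_smul hx₂ (prob_add_prob_compl (μ := μ) hA)
    rw [hμ_eq] at hmix
    exact hμ.eq hmix
  have hseg : ω ∈ openSegment ℝ x₁ x₂ :=
    ⟨_, _, ENNReal.toReal_pos hA0 (measure_ne_top μ A),
      ENNReal.toReal_pos hAc (measure_ne_top μ Aᶜ), by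
        rw [← ENNReal.toReal_add (measure_ne_top μ A) (measure_ne_top μ Aᶜ),
          measure_add_measure_compl hA, measure_univ, ENNReal.toReal_one], hω_eq.symm⟩
  obtain rfl := (mem_extremePoints_iff_left.1 hω).2 x₁ hx₁K x₂ hx₂K hseg
  exact hx₁

theorem IsBarycenter.measure_setOf_le_eq_zero_of_mem_extremePoints (hKc : Convex ℝ K)
    (hω : ω ∈ extremePoints ℝ K) (hμ : IsBarycenter μ ω) (ℓ : E →L[ℝ] ℝ) {r : ℝ}
    (hr : ℓ ω < r) : μ {y : K | r ≤ ℓ y} = 0 := by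
  by_contra hA0
  have hA : MeasurableSet {y : K | r ≤ ℓ y} :=
    measurableSet_le measurable_const (ℓ.continuous.comp continuous_subtype_val).measurable
  have := cond_isProbabilityMeasure hA0
  exact hr.not_ge <| (hμ.cond_of_mem_extremePoints hKc hω hA hA0).le_apply_of_ae_le
    ℓ.toContinuousAffineMap.cont (ae_cond_mem hA)

theorem IsBarycenter.eq_dirac_of_mem_extremePoints [μ.Regular] (hKc : Convex ℝ K)
    (hω : ω ∈ extremePoints ℝ K) (hμ : IsBarycenter μ ω) : μ = Measure.dirac ⟨ω, hω.1⟩ := by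
  refine μ.eq_dirac_of_forall_ne_exists_nhds_measure_eq_zero _ fun x hx => ?_
  obtain ⟨ℓ, hℓ⟩ : ∃ ℓ : E →L[ℝ] ℝ, ℓ ω < ℓ x :=
    geometric_hahn_banach_point_point fun h => hx (Subtype.ext h.symm)
  obtain ⟨r, hωr, hrx⟩ := exists_between hℓ
  have hU : IsOpen {y : K | r < ℓ y} :=
    isOpen_lt continuous_const (ℓ.continuous.comp continuous_subtype_val)
  exact ⟨{y : K | r < ℓ y}, hU.mem_nhds hrx, measure_mono_null (fun y (hy : r < ℓ y) => hy.le)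
    (hμ.measure_setOf_le_eq_zero_of_mem_extremePoints hKc hω ℓ hωr)⟩

end ExtremePoint

/-- A point `ω` of a compact convex set `K` is extreme if and only if the Dirac
measure `δ_ω` is the only Radon probability measure on `K` with barycenter `ω`. -/
theorem extremePoint_iff_dirac_unique_barycentric_measure
    {E : Type*} [AddCommGroup E] [Module ℝ E] [TopologicalSpace E]
    [IsTopologicalAddGroup E] [ContinuousSMul ℝ E] [LocallyConvexSpace ℝ E]
    [T2Space E] [MeasurableSpace E] [BorelSpace E]
    (K : Set E) (hK : IsCompact K) (hKc : Convex ℝ K)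
    (ω : E) (hω : ω ∈ K) :
    ω ∈ Set.extremePoints ℝ K ↔
      ∀ μ : Measure K, IsProbabilityMeasure μ → μ.Regular →
        (∀ f : E →ᵃ[ℝ] ℝ, Continuous f → f ω = ∫ x : K, f (x : E) ∂μ) →
        μ = Measure.dirac (⟨ω, hω⟩ : K) := by
  have : CompactSpace K := isCompact_iff_compactSpace.1 hK
  constructor
  · intro hext μ _ _ hμ
    exact IsBarycenter.eq_dirac_of_mem_extremePoints hKc hext hμ
  · intro h
    refine mem_extremePoints_iff_left.2 ⟨hω, fun x₁ hx₁ x₂ hx₂ ⟨a, b, ha, hb, hab, hx⟩ => ?_⟩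
    let μ := ENNReal.ofReal a • Measure.dirac (⟨x₁, hx₁⟩ : K) +
      ENNReal.ofReal b • Measure.dirac (⟨x₂, hx₂⟩ : K)
    have hab' : ENNReal.ofReal a + ENNReal.ofReal b = 1 := by
      rw [← ENNReal.ofReal_add ha.le hb.le, hab, ENNReal.ofReal_one]
    have hμ_prob : IsProbabilityMeasure μ := ⟨by simp [μ, hab']⟩
    have hμ : IsBarycenter μ ω := by
      have hmix := (isBarycenter_dirac ⟨x₁, hx₁⟩).smul_add_smul (isBarycenter_dirac ⟨x₂, hx₂⟩) hab'
      rwa [ENNReal.toReal_ofReal ha.le, ENNReal.toReal_ofReal hb.le, hx] at hmix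
    -- a finite inner regular measure on a Hausdorff space is regular
    have hμ_dirac := h μ hμ_prob inferInstance hμ
    have hx₁_pos : μ {⟨x₁, hx₁⟩} ≠ 0 := by simp [μ, ha]
    rw [hμ_dirac, Measure.dirac_apply' _ (measurableSet_singleton _)] at hx₁_pos
    exact congrArg Subtype.val (mem_singleton_iff.1 (mem_of_indicator_ne_zero hx₁_pos)).symm
end

section
/- Let 𝔄₁, 𝔄₂ be unital C*-algebras and ω a state on the (minimal) tensor product 𝔄₁ ⊗ 𝔄₂. If the restriction of ω to 𝔄₁ ⊗ 𝟙 is a pure state, then ω factorizes: ω(AB) = ω(A)ω(B) for all A ∈ 𝔄₁⊗𝟙 and B ∈ 𝟙⊗𝔄₂. -/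
open scoped ComplexOrder

/-!
For `e` in `𝔄₂` with `0 ≤ e ≤ 1`, the functional `x ↦ ω(x e)` on `𝔄₁` is positive and
majorized by `ω`, because `e` commutes with `𝔄₁` and so `x⋆ x e = x⋆ e x ≤ x⋆ x`. Purity makes it
a multiple `λ ω` of `ω`, and evaluating at `1` gives `λ = ω(e)`; hence `ω(a e) = ω(a) ω(e)`.
Both sides are linear in `e`, and every element of a star subalgebra is a linear combination of
elements `0 ≤ e ≤ 1` of it: by polarization it is one of elements `d⋆ d`, which rescale into
`[0, 1]`.
-/

section Polarization

variable {A : Type*} [Ring A] [StarRing A] [Algebra ℂ A] [StarModule ℂ A]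

theorem four_smul_eq_polarization (b : A) :
    (4 : ℂ) • b = star (1 + b) * (1 + b) - star (1 - b) * (1 - b)
      + Complex.I • (star (1 - Complex.I • b) * (1 - Complex.I • b))
      - Complex.I • (star (1 + Complex.I • b) * (1 + Complex.I • b)) := by
  simp only [star_add, star_sub, star_one, star_smul, Complex.star_def, Complex.conj_I, add_mul,
    mul_add, sub_mul, mul_sub, one_mul, mul_one, mul_smul_comm, smul_add, smul_sub, smul_smul,
    neg_smul, smul_neg]
  match_scalars <;> ring_nf <;> simp only [Complex.I_sq] <;> ring

theorem StarSubalgebra.mem_span_star_mul_self (S : StarSubalgebra ℂ A) {b : A} (hb : b ∈ S) :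
    b ∈ Submodule.span ℂ {x | ∃ d ∈ S, star d * d = x} := by
  set M := Submodule.span ℂ {x | ∃ d ∈ S, star d * d = x}
  have hmem : ∀ d ∈ S, star d * d ∈ M := fun d hd => Submodule.subset_span ⟨d, hd, rfl⟩
  have h4 : (4 : ℂ) • b ∈ M := by
    have hIb : Complex.I • b ∈ S := SMulMemClass.smul_mem _ hb
    rw [four_smul_eq_polarization]
    refine Submodule.sub_mem _ (Submodule.add_mem _ (Submodule.sub_mem _ ?_ ?_) ?_) ?_
    · exact hmem _ (add_mem (one_mem S) hb)
    · exact hmem _ (sub_mem (one_mem S) hb)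
    · exact Submodule.smul_mem _ _ (hmem _ (sub_mem (one_mem S) hIb))
    · exact Submodule.smul_mem _ _ (hmem _ (add_mem (one_mem S) hIb))
  simpa using Submodule.smul_mem _ (4⁻¹ : ℂ) h4

end Polarization

section CStarAlgebra

variable {A : Type*} [CStarAlgebra A] [PartialOrder A] [StarOrderedRing A]

theorem StarSubalgebra.mem_span_nonneg_le_one (S : StarSubalgebra ℂ A) {b : A} (hb : b ∈ S) :
    b ∈ Submodule.span ℂ {e | e ∈ S ∧ 0 ≤ e ∧ e ≤ 1} := by
  refine Submodule.span_le.mpr ?_ (S.mem_span_star_mul_self hb)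
  rintro _ ⟨d, hd, rfl⟩
  set r : ℝ := ‖d‖ + 1
  have hr : 0 < r := by positivity
  set d' : A := (r⁻¹ : ℂ) • d
  have hd' : ‖d'‖ ≤ 1 := by
    rw [norm_smul, norm_inv, Complex.norm_real, Real.norm_of_nonneg hr.le, inv_mul_le_iff₀ hr]
    linarith
  have hd'_nonneg : 0 ≤ star d' * d' := star_mul_self_nonneg d'
  have hd'_le_one : star d' * d' ≤ 1 := by
    rw [← CStarAlgebra.norm_le_one_iff_of_nonneg _ hd'_nonneg, CStarRing.norm_star_mul_self]
    exact mul_le_one₀ hd' (norm_nonneg _) hd'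
  have hd'_mem : star d' * d' ∈ S :=
    mul_mem (star_mem (SMulMemClass.smul_mem _ hd)) (SMulMemClass.smul_mem _ hd)
  have hdd : star d * d = ((r : ℂ) ^ 2) • (star d' * d') := by
    have : (r : ℂ) ≠ 0 := by exact_mod_cast hr.ne'
    simp only [d', star_smul, star_inv₀, Complex.star_def, Complex.conj_ofReal,
      smul_mul_smul_comm, smul_smul]
    field_simp
    simp
  rw [SetLike.mem_coe, hdd]
  exact Submodule.smul_mem _ _ (Submodule.subset_span ⟨hd'_mem, hd'_nonneg, hd'_le_one⟩)

def IsPureOn (ω : A →ₗ[ℂ] ℂ) (S : StarSubalgebra ℂ A) : Prop :=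
  ∀ ψ : S →ₗ[ℂ] ℂ, (∀ a : S, 0 ≤ ψ (star a * a)) →
    (∀ a : S, 0 ≤ ω (star (a : A) * (a : A)) - ψ (star a * a)) →
    ∃ l : ℝ, 0 ≤ l ∧ l ≤ 1 ∧ ∀ a : S, ψ a = l * ω (a : A)

namespace IsPureOn

variable {ω : A →ₗ[ℂ] ℂ} {S : StarSubalgebra ℂ A}

theorem map_mul_eq_mul_of_commute (hpure : IsPureOn ω S) (hω1 : ω 1 = 1)
    (hωpos : ∀ x, 0 ≤ ω (star x * x)) {e : A} (he : ∀ a ∈ S, Commute a e) (he0 : 0 ≤ e)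
    (he1 : e ≤ 1) {a : A} (ha : a ∈ S) : ω (a * e) = ω a * ω e := by
  have hω : ∀ x, 0 ≤ x → 0 ≤ ω x := fun x hx => by
    obtain ⟨s, rfl⟩ := CStarAlgebra.nonneg_iff_eq_star_mul_self.mp hx
    exact hωpos s
  have hconj : ∀ x : S, ((star x * x : S) : A) * e = star (x : A) * e * x := fun x => by
    show star (x : A) * x * e = _
    rw [mul_assoc, (he x x.2).eq, ← mul_assoc]
  let ψ : S →ₗ[ℂ] ℂ := ω ∘ₗ LinearMap.mulRight ℂ e ∘ₗ S.subtype.toLinearMap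
  have hψ : ∀ x : S, ψ x = ω (x * e) := fun _ => rfl
  have hψ_nonneg : ∀ x : S, 0 ≤ ψ (star x * x) := fun x => by
    rw [hψ, hconj]
    exact hω _ (star_left_conjugate_nonneg he0 _)
  have hψ_le : ∀ x : S, 0 ≤ ω (star (x : A) * x) - ψ (star x * x) := fun x => by
    have hsub : star (x : A) * x - star (x : A) * e * x = star (x : A) * (1 - e) * x := by
      noncomm_ring
    rw [hψ, hconj, ← map_sub, hsub]
    exact hω _ (star_left_conjugate_nonneg (sub_nonneg.mpr he1) _)
  obtain ⟨l, -, -, hl⟩ := hpure ψ hψ_nonneg hψ_le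
  have hl1 : (l : ℂ) = ω e := by simpa [hψ, hω1] using (hl 1).symm
  simpa [hψ, hl1, mul_comm] using hl ⟨a, ha⟩

theorem map_mul_eq_mul (hpure : IsPureOn ω S) (hω1 : ω 1 = 1)
    (hωpos : ∀ x, 0 ≤ ω (star x * x)) {T : StarSubalgebra ℂ A}
    (hcomm : ∀ a ∈ S, ∀ b ∈ T, Commute a b) {a b : A} (ha : a ∈ S) (hb : b ∈ T) :
    ω (a * b) = ω a * ω b := by
  let L : A →ₗ[ℂ] ℂ := ω ∘ₗ LinearMap.mulLeft ℂ a - ω a • ω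
  have hL : ∀ x, x ∈ LinearMap.ker L ↔ ω (a * x) = ω a * ω x := fun x => sub_eq_zero
  refine (hL b).mp (Submodule.span_le.mpr ?_ (T.mem_span_nonneg_le_one hb))
  rintro e ⟨heT, he0, he1⟩
  exact (hL e).mpr <| hpure.map_mul_eq_mul_of_commute hω1 hωpos
    (fun a' ha' => hcomm a' ha' e heT) he0 he1 ha

end IsPureOn

end CStarAlgebra

theorem pure_restriction_implies_factorization_general
    {𝔄 : Type*} [NormedRing 𝔄] [StarRing 𝔄] [CStarRing 𝔄]
    [NormedAlgebra ℂ 𝔄] [StarModule ℂ 𝔄] [CompleteSpace 𝔄]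
    (𝔄₁ 𝔄₂ : StarSubalgebra ℂ 𝔄)
    (hcomm : ∀ a ∈ 𝔄₁, ∀ b ∈ 𝔄₂, a * b = b * a)
    (ω : 𝔄 →ₗ[ℂ] ℂ)
    (hω1 : ω 1 = 1) (hωpos : ∀ a : 𝔄, 0 ≤ ω (star a * a))
    -- the restriction of `ω` to `𝔄₁` is a pure state: every positive linear
    -- functional on `𝔄₁` majorized by it is a multiple `λ·ω|_{𝔄₁}`, `λ ∈ [0,1]`
    (hpure : ∀ ψ : 𝔄₁ →ₗ[ℂ] ℂ,
      (∀ a : 𝔄₁, 0 ≤ ψ (star a * a)) →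
      (∀ a : 𝔄₁, 0 ≤ ω (star (a : 𝔄) * (a : 𝔄)) - ψ (star a * a)) →
      ∃ l : ℝ, 0 ≤ l ∧ l ≤ 1 ∧ ∀ a : 𝔄₁, ψ a = l * ω (a : 𝔄)) :
    ∀ a ∈ 𝔄₁, ∀ b ∈ 𝔄₂, ω (a * b) = ω a * ω b := by
  let : CStarAlgebra 𝔄 := { }
  let := CStarAlgebra.spectralOrder 𝔄
  let := CStarAlgebra.spectralOrderedRing 𝔄
  exact fun a ha b hb => IsPureOn.map_mul_eq_mul hpure hω1 hωpos hcomm ha hb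

/-- If the restriction of a state `ω` on `𝔄₁ ⊗ 𝔄₂` to the subalgebra
`𝔄₁ ⊗ 𝟙` is pure, then `ω` factorizes: `ω(AB) = ω(A)ω(B)` for `A ∈ 𝔄₁ ⊗ 𝟙`
and `B ∈ 𝟙 ⊗ 𝔄₂`.  Here the tensor product is formalized abstractly: `𝔄₁` and
`𝔄₂` are commuting unital star subalgebras of a unital C*-algebra `𝔄`
(the images of `𝔄₁ ⊗ 𝟙` and `𝟙 ⊗ 𝔄₂` in `𝔄₁ ⊗ 𝔄₂`). -/
theorem pure_restriction_implies_factorization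
    {𝔄 : Type*} [NormedRing 𝔄] [StarRing 𝔄] [CStarRing 𝔄] [NormOneClass 𝔄]
    [NormedAlgebra ℂ 𝔄] [StarModule ℂ 𝔄] [CompleteSpace 𝔄]
    (𝔄₁ 𝔄₂ : StarSubalgebra ℂ 𝔄)
    (hcomm : ∀ a ∈ 𝔄₁, ∀ b ∈ 𝔄₂, a * b = b * a)
    (ω : 𝔄 →ₗ[ℂ] ℂ)
    (hω1 : ω 1 = 1) (hωpos : ∀ a : 𝔄, 0 ≤ ω (star a * a))
    -- the restriction of `ω` to `𝔄₁` is a pure state: every positive linear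
    -- functional on `𝔄₁` majorized by it is a multiple `λ·ω|_{𝔄₁}`, `λ ∈ [0,1]`
    (hpure : ∀ ψ : 𝔄₁ →ₗ[ℂ] ℂ,
      (∀ a : 𝔄₁, 0 ≤ ψ (star a * a)) →
      (∀ a : 𝔄₁, 0 ≤ ω (star (a : 𝔄) * (a : 𝔄)) - ψ (star a * a)) →
      ∃ l : ℝ, 0 ≤ l ∧ l ≤ 1 ∧ ∀ a : 𝔄₁, ψ a = l * ω (a : 𝔄)) :
    ∀ a ∈ 𝔄₁, ∀ b ∈ 𝔄₂, ω (a * b) = ω a * ω b :=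
  pure_restriction_implies_factorization_general 𝔄₁ 𝔄₂ hcomm ω hω1 hωpos hpure
end

section
/- The entanglement of formation is convex: for states ω₁, ω₂ on a unital C*-algebra 𝔄 = 𝔄₁⊗𝔄₂ and λ₁,λ₂ ≥ 0 with λ₁+λ₂ = 1, one has E(λ₁ω₁ + λ₂ω₂) ≤ λ₁E(ω₁) + λ₂E(ω₂). The key lemma is: λ₁M_{ω₁}(𝔖) + λ₂M_{ω₂}(𝔖) ⊆ M_{λ₁ω₁+λ₂ω₂}(𝔖), where M_ω(𝔖) is the set of probability Radon measures on the state space 𝔖 with barycenter ω. -/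
open MeasureTheory
open scoped ComplexOrder

section

variable {𝔄 : Type*} [NormedRing 𝔄] [StarRing 𝔄] [NormedAlgebra ℂ 𝔄] [StarModule ℂ 𝔄]

/-- The state space of a unital normed star algebra: positive linear
functionals `φ` with `φ(1) = 1`, in the weak* topology. -/
def stateSpace (𝔄 : Type*) [NormedRing 𝔄] [StarRing 𝔄] [NormedAlgebra ℂ 𝔄] :
    Set (WeakDual ℂ 𝔄) :=
  {φ | φ 1 = 1 ∧ ∀ a : 𝔄, 0 ≤ φ (star a * a)}

/-- Restriction of a functional on `𝔄` to a star subalgebra `𝔄₁ ⊆ 𝔄`. -/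
noncomputable def restrictFunctional (𝔄₁ : StarSubalgebra ℂ 𝔄)
    (φ : WeakDual ℂ 𝔄) : WeakDual ℂ 𝔄₁ :=
  ContinuousLinearMap.comp (φ : 𝔄 →L[ℂ] ℂ)
    ⟨𝔄₁.subtype.toAlgHom.toLinearMap, continuous_subtype_val⟩

/-- `μ` is a probability measure on the state space with barycenter `ω`. -/
def hasBarycenter [MeasurableSpace (WeakDual ℂ 𝔄)]
    (μ : Measure (stateSpace 𝔄)) (ω : WeakDual ℂ 𝔄) : Prop :=
  IsProbabilityMeasure μ ∧
    ∀ a : 𝔄, ∫ φ : stateSpace 𝔄, (φ : WeakDual ℂ 𝔄) a ∂μ = ω a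

/-- Entanglement of formation associated with a concave function `𝔽` on the
states of the subalgebra `𝔄₁`: `E(ω) = inf { ∫ 𝔽(rφ) dμ(φ) : μ ∈ M_ω(𝔖) }`. -/
noncomputable def EoF [MeasurableSpace (WeakDual ℂ 𝔄)]
    (𝔄₁ : StarSubalgebra ℂ 𝔄) (𝔽 : WeakDual ℂ 𝔄₁ → ℝ)
    (ω : WeakDual ℂ 𝔄) : ℝ :=
  sInf {r : ℝ | ∃ μ : Measure (stateSpace 𝔄), hasBarycenter μ ω ∧
    r = ∫ φ : stateSpace 𝔄, 𝔽 (restrictFunctional 𝔄₁ (φ : WeakDual ℂ 𝔄)) ∂μ}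

end

/-! A measure with barycenter `λ₁ω₁ + λ₂ω₂` is obtained by mixing measures with barycenters `ω₁`
and `ω₂` with the same weights: on the weak*-compact state space every continuous function is
integrable, so integrals depend affinely on the measure. Applied to `𝔽 ∘ r` this shows that
`λ₁` times the values competing for `E(ω₁)` plus `λ₂` times those for `E(ω₂)` compete for
`E(λ₁ω₁ + λ₂ω₂)`, and passing to infima gives convexity. -/

section PositiveFunctional

variable {R M F : Type*} [NonUnitalSemiring R] [PartialOrder R] [StarRing R] [StarOrderedRing R]
  [AddCommMonoid M] [PartialOrder M] [IsOrderedAddMonoid M] [FunLike F R M]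
  [AddMonoidHomClass F R M]

lemma map_nonneg_of_forall_star_mul_self_nonneg (f : F) (hf : ∀ a, 0 ≤ f (star a * a))
    {x : R} (hx : 0 ≤ x) : 0 ≤ f x := by
  rw [StarOrderedRing.nonneg_iff] at hx
  induction hx using AddSubmonoid.closure_induction with
  | mem y hy => obtain ⟨a, rfl⟩ := hy; exact hf a
  | zero => simp
  | add y z _ _ hy hz => rw [map_add]; exact add_nonneg hy hz

end PositiveFunctional

section StateSpace

variable {𝔄 : Type*} [NormedRing 𝔄] [StarRing 𝔄] [NormedAlgebra ℂ 𝔄]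

lemma isClosed_stateSpace : IsClosed (stateSpace 𝔄) := by
  have h : stateSpace 𝔄 = {φ | φ 1 = 1} ∩ ⋂ a : 𝔄, {φ | 0 ≤ φ (star a * a)} := by
    ext φ; simp [stateSpace]
  rw [h]
  exact (isClosed_eq (WeakDual.eval_continuous 1) continuous_const).inter <|
    isClosed_iInter fun a ↦ isClosed_Ici.preimage (WeakDual.eval_continuous (star a * a))

lemma continuous_restrictFunctional [StarModule ℂ 𝔄] (𝔄₁ : StarSubalgebra ℂ 𝔄) :
    Continuous (restrictFunctional 𝔄₁) :=
  WeakDual.continuous_of_continuous_eval fun a ↦ WeakDual.eval_continuous (a : 𝔄)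

end StateSpace

section CStar

variable {𝔄 : Type*} [NormedRing 𝔄] [StarRing 𝔄] [CStarRing 𝔄] [NormedAlgebra ℂ 𝔄]
  [StarModule ℂ 𝔄] [CompleteSpace 𝔄]

lemma norm_apply_le_of_mem_stateSpace {φ : WeakDual ℂ 𝔄} (hφ : φ ∈ stateSpace 𝔄) (a : 𝔄) :
    ‖φ a‖ ≤ 4 * ‖a‖ := by
  -- positivity of `φ` on `star a * a` makes it a positive map for the spectral order
  let _ : CStarAlgebra 𝔄 := {}
  let _ := CStarAlgebra.spectralOrder 𝔄
  have := CStarAlgebra.spectralOrderedRing 𝔄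
  let f : 𝔄 →ₚ[ℂ] ℂ := .mk₀ (φ : 𝔄 →L[ℂ] ℂ).toLinearMap
    fun x hx ↦ map_nonneg_of_forall_star_mul_self_nonneg φ hφ.2 hx
  have h_nonneg (x : 𝔄) (hx : 0 ≤ x) : ‖φ x‖ ≤ ‖x‖ := by
    have h : ‖φ x‖ ≤ ‖φ 1‖ * ‖x‖ := f.norm_apply_le_of_nonneg x hx
    rwa [hφ.1, norm_one, one_mul] at h
  obtain ⟨x, hx_nonneg, hx_norm, ha⟩ := CStarAlgebra.exists_sum_four_nonneg a
  calc ‖φ a‖ = ‖∑ i : Fin 4, Complex.I ^ (i : ℕ) * φ (x i)‖ := by simp [ha, map_sum]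
    _ ≤ ∑ i, ‖φ (x i)‖ := (norm_sum_le _ _).trans_eq (by simp)
    _ ≤ ∑ _i : Fin 4, ‖a‖ :=
      Finset.sum_le_sum fun i _ ↦ (h_nonneg _ (hx_nonneg i)).trans (hx_norm i)
    _ = 4 * ‖a‖ := by simp

lemma isCompact_stateSpace : IsCompact (stateSpace 𝔄) :=
  (WeakDual.isCompact_closedBall (0 : StrongDual ℂ 𝔄) 4).of_isClosed_subset isClosed_stateSpace
    fun φ hφ ↦ by
      simpa using (WeakDual.toStrongDual φ).opNorm_le_bound (by norm_num)
        (norm_apply_le_of_mem_stateSpace hφ)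

end CStar

open Pointwise in
lemma Real.sInf_le_smul_sInf_add_smul_sInf {s t u : Set ℝ} (hs : s.Nonempty) (hs' : BddBelow s)
    (ht : t.Nonempty) (ht' : BddBelow t) (hu : BddBelow u) {a b : ℝ} (ha : 0 ≤ a) (hb : 0 ≤ b)
    (h : a • s + b • t ⊆ u) : sInf u ≤ a * sInf s + b * sInf t :=
  calc sInf u ≤ sInf (a • s + b • t) := csInf_le_csInf hu (hs.smul_set.add ht.smul_set) h
    _ = a * sInf s + b * sInf t := by
      rw [csInf_add hs.smul_set (hs'.smul_of_nonneg ha) ht.smul_set (ht'.smul_of_nonneg hb),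
        Real.sInf_smul_of_nonneg ha, Real.sInf_smul_of_nonneg hb, smul_eq_mul, smul_eq_mul]

lemma MeasureTheory.integral_ofReal_smul_add_ofReal_smul_measure {α E : Type*} [MeasurableSpace α]
    [NormedAddCommGroup E] [NormedSpace ℝ E] {μ₁ μ₂ : Measure α} {f : α → E}
    (hf₁ : Integrable f μ₁) (hf₂ : Integrable f μ₂) {l₁ l₂ : ℝ} (hl₁ : 0 ≤ l₁) (hl₂ : 0 ≤ l₂) :
    ∫ x, f x ∂(ENNReal.ofReal l₁ • μ₁ + ENNReal.ofReal l₂ • μ₂) =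
      l₁ • ∫ x, f x ∂μ₁ + l₂ • ∫ x, f x ∂μ₂ := by
  rw [integral_add_measure (hf₁.smul_measure ENNReal.ofReal_ne_top)
      (hf₂.smul_measure ENNReal.ofReal_ne_top), integral_smul_measure, integral_smul_measure,
    ENNReal.toReal_ofReal hl₁, ENNReal.toReal_ofReal hl₂]

lemma MeasureTheory.isProbabilityMeasure_ofReal_smul_add_ofReal_smul {α : Type*}
    [MeasurableSpace α] {μ₁ μ₂ : Measure α} [IsProbabilityMeasure μ₁] [IsProbabilityMeasure μ₂]
    {l₁ l₂ : ℝ} (hl₁ : 0 ≤ l₁) (hl₂ : 0 ≤ l₂) (hl : l₁ + l₂ = 1) :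
    IsProbabilityMeasure (ENNReal.ofReal l₁ • μ₁ + ENNReal.ofReal l₂ • μ₂) := by
  constructor
  simp [← ENNReal.ofReal_add hl₁ hl₂, hl]

lemma hasBarycenter_dirac {𝔄 : Type*} [NormedRing 𝔄] [StarRing 𝔄] [NormedAlgebra ℂ 𝔄]
    [MeasurableSpace (WeakDual ℂ 𝔄)] [OpensMeasurableSpace (WeakDual ℂ 𝔄)] {ω : WeakDual ℂ 𝔄}
    (hω : ω ∈ stateSpace 𝔄) :
    hasBarycenter (Measure.dirac (⟨ω, hω⟩ : stateSpace 𝔄)) ω :=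
  ⟨inferInstance, fun _ ↦ integral_dirac _ _⟩

section Barycenter

variable {𝔄 : Type*} [NormedRing 𝔄] [StarRing 𝔄] [CStarRing 𝔄] [NormedAlgebra ℂ 𝔄]
  [StarModule ℂ 𝔄] [CompleteSpace 𝔄]
  [MeasurableSpace (WeakDual ℂ 𝔄)] [OpensMeasurableSpace (WeakDual ℂ 𝔄)]

lemma Continuous.integrable_comp_coe_stateSpace {E : Type*} [NormedAddCommGroup E]
    [SecondCountableTopology E] [MeasurableSpace E] [BorelSpace E] {f : WeakDual ℂ 𝔄 → E}
    (hf : Continuous f) (μ : Measure (stateSpace 𝔄)) [IsFiniteMeasure μ] :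
    Integrable (fun φ : stateSpace 𝔄 ↦ f φ) μ :=
  have := isCompact_iff_compactSpace.mp (isCompact_stateSpace (𝔄 := 𝔄))
  (BoundedContinuousFunction.mkOfCompact ⟨_, hf.comp continuous_subtype_val⟩).integrable μ

lemma hasBarycenter.ofReal_smul_add_ofReal_smul {μ₁ μ₂ : Measure (stateSpace 𝔄)}
    {ω₁ ω₂ : WeakDual ℂ 𝔄} (h₁ : hasBarycenter μ₁ ω₁) (h₂ : hasBarycenter μ₂ ω₂) {l₁ l₂ : ℝ}
    (hl₁ : 0 ≤ l₁) (hl₂ : 0 ≤ l₂) (hl : l₁ + l₂ = 1) :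
    hasBarycenter (ENNReal.ofReal l₁ • μ₁ + ENNReal.ofReal l₂ • μ₂) (l₁ • ω₁ + l₂ • ω₂) := by
  have := h₁.1
  have := h₂.1
  refine ⟨isProbabilityMeasure_ofReal_smul_add_ofReal_smul hl₁ hl₂ hl, fun a ↦ ?_⟩
  have h_eval := (WeakDual.eval_continuous (𝕜 := ℂ) a).integrable_comp_coe_stateSpace
  rw [integral_ofReal_smul_add_ofReal_smul_measure (h_eval μ₁) (h_eval μ₂) hl₁ hl₂,
    h₁.2 a, h₂.2 a]
  rfl

end Barycenter

section EntanglementOfFormation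

variable {𝔄 : Type*} [NormedRing 𝔄] [StarRing 𝔄] [NormedAlgebra ℂ 𝔄] [StarModule ℂ 𝔄]
  [MeasurableSpace (WeakDual ℂ 𝔄)] (𝔄₁ : StarSubalgebra ℂ 𝔄)

def eofValues (𝔽 : WeakDual ℂ 𝔄₁ → ℝ) (ω : WeakDual ℂ 𝔄) : Set ℝ :=
  {r : ℝ | ∃ μ : Measure (stateSpace 𝔄), hasBarycenter μ ω ∧
    r = ∫ φ : stateSpace 𝔄, 𝔽 (restrictFunctional 𝔄₁ (φ : WeakDual ℂ 𝔄)) ∂μ}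

lemma EoF_eq_sInf_eofValues (𝔽 : WeakDual ℂ 𝔄₁ → ℝ) (ω : WeakDual ℂ 𝔄) :
    EoF 𝔄₁ 𝔽 ω = sInf (eofValues 𝔄₁ 𝔽 ω) := rfl

lemma eofValues_nonempty [OpensMeasurableSpace (WeakDual ℂ 𝔄)] (𝔽 : WeakDual ℂ 𝔄₁ → ℝ)
    {ω : WeakDual ℂ 𝔄} (hω : ω ∈ stateSpace 𝔄) : (eofValues 𝔄₁ 𝔽 ω).Nonempty :=
  ⟨_, _, hasBarycenter_dirac hω, rfl⟩

lemma bddBelow_eofValues {𝔽 : WeakDual ℂ 𝔄₁ → ℝ} (h𝔽 : ∀ ψ, 0 ≤ 𝔽 ψ) (ω : WeakDual ℂ 𝔄) :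
    BddBelow (eofValues 𝔄₁ 𝔽 ω) :=
  ⟨0, by rintro _ ⟨μ, -, rfl⟩; exact integral_nonneg fun φ ↦ h𝔽 _⟩

open Pointwise in
lemma smul_eofValues_add_smul_eofValues_subset [CStarRing 𝔄] [CompleteSpace 𝔄]
    [OpensMeasurableSpace (WeakDual ℂ 𝔄)] {𝔽 : WeakDual ℂ 𝔄₁ → ℝ} (h𝔽 : Continuous 𝔽)
    (ω₁ ω₂ : WeakDual ℂ 𝔄) {l₁ l₂ : ℝ} (hl₁ : 0 ≤ l₁) (hl₂ : 0 ≤ l₂) (hl : l₁ + l₂ = 1) :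
    l₁ • eofValues 𝔄₁ 𝔽 ω₁ + l₂ • eofValues 𝔄₁ 𝔽 ω₂ ⊆ eofValues 𝔄₁ 𝔽 (l₁ • ω₁ + l₂ • ω₂) := by
  rintro _ ⟨_, ⟨_, ⟨μ₁, h₁, rfl⟩, rfl⟩, _, ⟨_, ⟨μ₂, h₂, rfl⟩, rfl⟩, rfl⟩
  have := h₁.1
  have := h₂.1
  have h_int := (h𝔽.comp (continuous_restrictFunctional 𝔄₁)).integrable_comp_coe_stateSpace
  exact ⟨_, h₁.ofReal_smul_add_ofReal_smul h₂ hl₁ hl₂ hl,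
    (integral_ofReal_smul_add_ofReal_smul_measure (h_int μ₁) (h_int μ₂) hl₁ hl₂).symm⟩

end EntanglementOfFormation

theorem eof_convex_general
    {𝔄 : Type*} [NormedRing 𝔄] [StarRing 𝔄] [CStarRing 𝔄]
    [NormedAlgebra ℂ 𝔄] [StarModule ℂ 𝔄] [CompleteSpace 𝔄]
    [MeasurableSpace (WeakDual ℂ 𝔄)] [BorelSpace (WeakDual ℂ 𝔄)]
    (𝔄₁ : StarSubalgebra ℂ 𝔄)
    (𝔽 : WeakDual ℂ 𝔄₁ → ℝ) (h𝔽cont : Continuous 𝔽)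
    (h𝔽nonneg : ∀ ψ, 0 ≤ 𝔽 ψ)
    (ω₁ ω₂ : WeakDual ℂ 𝔄) (hω₁ : ω₁ ∈ stateSpace 𝔄) (hω₂ : ω₂ ∈ stateSpace 𝔄)
    (l₁ l₂ : ℝ) (hl₁ : 0 ≤ l₁) (hl₂ : 0 ≤ l₂) (hl : l₁ + l₂ = 1) :
    (∀ μ₁ μ₂ : Measure (stateSpace 𝔄), hasBarycenter μ₁ ω₁ → hasBarycenter μ₂ ω₂ →
      hasBarycenter (ENNReal.ofReal l₁ • μ₁ + ENNReal.ofReal l₂ • μ₂)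
        (l₁ • ω₁ + l₂ • ω₂)) ∧
    EoF 𝔄₁ 𝔽 (l₁ • ω₁ + l₂ • ω₂) ≤ l₁ * EoF 𝔄₁ 𝔽 ω₁ + l₂ * EoF 𝔄₁ 𝔽 ω₂ := by
  refine ⟨fun μ₁ μ₂ h₁ h₂ ↦ h₁.ofReal_smul_add_ofReal_smul h₂ hl₁ hl₂ hl, ?_⟩
  simp only [EoF_eq_sInf_eofValues]
  exact Real.sInf_le_smul_sInf_add_smul_sInf (eofValues_nonempty 𝔄₁ 𝔽 hω₁)
    (bddBelow_eofValues 𝔄₁ h𝔽nonneg ω₁) (eofValues_nonempty 𝔄₁ 𝔽 hω₂)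
    (bddBelow_eofValues 𝔄₁ h𝔽nonneg ω₂) (bddBelow_eofValues 𝔄₁ h𝔽nonneg _) hl₁ hl₂
    (smul_eofValues_add_smul_eofValues_subset 𝔄₁ h𝔽cont ω₁ ω₂ hl₁ hl₂ hl)

/-- Convexity of the entanglement of formation
`E(λ₁ω₁ + λ₂ω₂) ≤ λ₁E(ω₁) + λ₂E(ω₂)`, together with the key lemma
`λ₁·M_{ω₁}(𝔖) + λ₂·M_{ω₂}(𝔖) ⊆ M_{λ₁ω₁+λ₂ω₂}(𝔖)` for measures with fixed
barycenters on the state space of a unital C*-algebra `𝔄 = 𝔄₁ ⊗ 𝔄₂` (here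
`𝔄₁` is realized as a unital star subalgebra of `𝔄`, and `r` is the
restriction map to `𝔄₁`). -/
theorem eof_convex
    {𝔄 : Type*} [NormedRing 𝔄] [StarRing 𝔄] [CStarRing 𝔄] [NormOneClass 𝔄]
    [NormedAlgebra ℂ 𝔄] [StarModule ℂ 𝔄] [CompleteSpace 𝔄]
    [MeasurableSpace (WeakDual ℂ 𝔄)] [BorelSpace (WeakDual ℂ 𝔄)]
    (𝔄₁ : StarSubalgebra ℂ 𝔄)
    (𝔽 : WeakDual ℂ 𝔄₁ → ℝ) (h𝔽cont : Continuous 𝔽)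
    (h𝔽nonneg : ∀ ψ, 0 ≤ 𝔽 ψ)
    (h𝔽concave : ConcaveOn ℝ (stateSpace 𝔄₁) 𝔽)
    (ω₁ ω₂ : WeakDual ℂ 𝔄) (hω₁ : ω₁ ∈ stateSpace 𝔄) (hω₂ : ω₂ ∈ stateSpace 𝔄)
    (l₁ l₂ : ℝ) (hl₁ : 0 ≤ l₁) (hl₂ : 0 ≤ l₂) (hl : l₁ + l₂ = 1) :
    (∀ μ₁ μ₂ : Measure (stateSpace 𝔄), hasBarycenter μ₁ ω₁ → hasBarycenter μ₂ ω₂ →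
      hasBarycenter (ENNReal.ofReal l₁ • μ₁ + ENNReal.ofReal l₂ • μ₂)
        (l₁ • ω₁ + l₂ • ω₂)) ∧
    EoF 𝔄₁ 𝔽 (l₁ • ω₁ + l₂ • ω₂) ≤ l₁ * EoF 𝔄₁ 𝔽 ω₁ + l₂ * EoF 𝔄₁ 𝔽 ω₂ :=
  eof_convex_general 𝔄₁ 𝔽 h𝔽cont h𝔽nonneg ω₁ ω₂ hω₁ hω₂ l₁ l₂ hl₁ hl₂ hl
end
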